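/- Let f(u) = e^u − u − 1 and for x > 2 let ζ(x) > 0 be the unique positive solution of u(e^u − 1)/f(u) = x. Then ζ is a concave function of x on (2, ∞), i.e. ζ''(x) ≤ 0 for all x > 2. -/

import Mathlib

/-!
On `(2, ∞)`, `ζ` is the inverse of `g u = u (eᵘ - 1) / (eᵘ - u - 1)` on `(0, ∞)`. There `g` is
increasing, since `g' > 0` amounts to `2 sinh (u / 2) > u`, and convex: the numerator `Q` of `g''`
satisfies `Q 0 = 0` and `Q' = u eᵘ R`, where `R 0 = R' 0 = 0` and `R'' = 2 ((u - 1) eᵘ + 1) ≥ 0`.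
The inverse of an increasing convex function is concave, and `ζ'' = -g''(ζ) / g'(ζ)³ ≤ 0`.
-/

open Real Set Filter Topology

lemma nonneg_of_hasDerivAt_nonneg {F F' : ℝ → ℝ} (hF : ∀ t, HasDerivAt F (F' t) t)
    (h0 : F 0 = 0) (hF' : ∀ t, 0 < t → 0 ≤ F' t) {u : ℝ} (hu : 0 ≤ u) : 0 ≤ F u := by
  have hmono : MonotoneOn F (Ici 0) :=
    monotoneOn_of_hasDerivWithinAt_nonneg (convex_Ici 0)
      (fun t _ ↦ (hF t).continuousAt.continuousWithinAt)
      (fun t _ ↦ (hF t).hasDerivWithinAt) (by simpa using hF')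
  simpa [h0] using hmono self_mem_Ici hu hu

section LeftInverse

variable {g g' g'' ζ : ℝ → ℝ} {s t : Set ℝ}

theorem ConvexOn.concaveOn_of_leftInvOn (hg : ConvexOn ℝ s g) (hmono : StrictMonoOn g s)
    (ht : Convex ℝ t) (hmaps : MapsTo ζ t s) (hinv : LeftInvOn g ζ t) : ConcaveOn ℝ t ζ := by
  refine ⟨ht, fun x hx y hy a b ha hb hab ↦ ?_⟩
  have hxy := ht hx hy ha hb hab
  rw [← hmono.le_iff_le (hg.1 (hmaps hx) (hmaps hy) ha hb hab) (hmaps hxy), hinv hxy]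
  calc g (a • ζ x + b • ζ y) ≤ a • g (ζ x) + b • g (ζ y) :=
        hg.2 (hmaps hx) (hmaps hy) ha hb hab
    _ = a • x + b • y := by rw [hinv hx, hinv hy]

theorem StrictMonoOn.continuousAt_of_leftInvOn {x : ℝ} (hmono : StrictMonoOn g s)
    (hmaps : MapsTo ζ t s) (hinv : LeftInvOn g ζ t) (hs : s ∈ 𝓝 (ζ x)) (ht : t ∈ 𝓝 x)
    (hg : ContinuousAt g (ζ x)) : ContinuousAt ζ x := by
  have hx : x ∈ t := mem_of_mem_nhds ht
  refine continuousAt_of_monotoneOn_of_image_mem_nhds (fun y hy z hz hyz ↦ ?_) ht ?_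
  · exact (hmono.le_iff_le (hmaps hy) (hmaps hz)).1 (by rwa [hinv hy, hinv hz])
  · have : s ∩ g ⁻¹' t ∈ 𝓝 (ζ x) := inter_mem hs (hg.preimage_mem_nhds (by rwa [hinv hx]))
    exact mem_of_superset this fun u ⟨hu, hgu⟩ ↦
      ⟨g u, hgu, hmono.injOn (hmaps hgu) hu (hinv hgu)⟩

theorem StrictMonoOn.hasDerivAt_of_leftInvOn {x : ℝ} (hmono : StrictMonoOn g s)
    (hmaps : MapsTo ζ t s) (hinv : LeftInvOn g ζ t) (hs : IsOpen s) (ht : IsOpen t) (hx : x ∈ t)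
    (hg : HasDerivAt g (g' (ζ x)) (ζ x)) (hg' : g' (ζ x) ≠ 0) :
    HasDerivAt ζ (g' (ζ x))⁻¹ x :=
  have hcont := hmono.continuousAt_of_leftInvOn hmaps hinv (hs.mem_nhds (hmaps hx))
    (ht.mem_nhds hx) hg.continuousAt
  hg.of_local_left_inverse hcont hg' (eventually_of_mem (ht.mem_nhds hx) hinv)

theorem hasDerivAt_deriv_of_hasDerivAt_inv_comp {x : ℝ} (ht : t ∈ 𝓝 x)
    (hζ : ∀ y ∈ t, HasDerivAt ζ (g' (ζ y))⁻¹ y) (hg' : HasDerivAt g' (g'' (ζ x)) (ζ x))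
    (hne : g' (ζ x) ≠ 0) : HasDerivAt (deriv ζ) (-g'' (ζ x) / g' (ζ x) ^ 3) x := by
  have heq : (fun y ↦ (g' (ζ y))⁻¹) =ᶠ[𝓝 x] deriv ζ :=
    eventually_of_mem ht fun y hy ↦ (hζ y hy).deriv.symm
  refine (((hg'.comp x (hζ x (mem_of_mem_nhds ht))).inv hne).congr_of_eventuallyEq
    heq.symm).congr_deriv ?_
  simp only [Function.comp_apply]
  field_simp

end LeftInverse

lemma one_sub_mul_exp_le_one (u : ℝ) : (1 - u) * exp u ≤ 1 := by
  have h := add_one_le_exp (-u)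
  have := mul_le_mul_of_nonneg_right h (exp_pos u).le
  rwa [← exp_add, neg_add_cancel, exp_zero, neg_add_eq_sub] at this

lemma sq_mul_exp_lt_sq_exp_sub_one {u : ℝ} (hu : 0 < u) : u ^ 2 * exp u < (exp u - 1) ^ 2 := by
  set a := exp (u / 2)
  have ha : exp u = a ^ 2 := by rw [← exp_nat_mul]; ring_nf
  have hsinh : u < a - a⁻¹ := by
    have := self_lt_sinh_iff.2 (half_pos hu)
    rw [sinh_eq, exp_neg] at this
    linarith
  have ha0 : a ≠ 0 := (exp_pos _).ne'
  have : exp u - 1 = a * (a - a⁻¹) := by rw [ha]; field_simp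
  rw [this, ha, mul_pow, mul_comm]
  gcongr

lemma expRatioDeriv2_num_nonneg {u : ℝ} (hu : 0 ≤ u) :
    0 ≤ (u ^ 2 - 4 * u + 2) * exp u ^ 2 + (u ^ 3 + u ^ 2 + 4 * u - 4) * exp u + 2 := by
  have hR' : ∀ t, 0 ≤ t → 0 ≤ (2 * t - 4) * exp t + 2 * t + 4 := by
    have hd : ∀ t, HasDerivAt (fun t ↦ (2 * t - 4) * exp t + 2 * t + 4)
        ((2 * t - 2) * exp t + 2) t := fun t ↦
      ((((((hasDerivAt_id' t).const_mul 2).sub_const 4).mul (hasDerivAt_exp t)).add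
        ((hasDerivAt_id' t).const_mul 2)).add_const 4).congr_deriv (by ring)
    refine fun t ↦ nonneg_of_hasDerivAt_nonneg hd (by simp) fun t _ ↦ ?_
    linarith [one_sub_mul_exp_le_one t]
  have hR : ∀ t, 0 ≤ t → 0 ≤ (2 * t - 6) * exp t + t ^ 2 + 4 * t + 6 := by
    have hd : ∀ t, HasDerivAt (fun t ↦ (2 * t - 6) * exp t + t ^ 2 + 4 * t + 6)
        ((2 * t - 4) * exp t + 2 * t + 4) t := fun t ↦
      (((((((hasDerivAt_id' t).const_mul 2).sub_const 6).mul (hasDerivAt_exp t)).add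
        (hasDerivAt_pow 2 t)).add ((hasDerivAt_id' t).const_mul 4)).add_const 6).congr_deriv
        (by push_cast; ring)
    exact fun t ↦ nonneg_of_hasDerivAt_nonneg hd (by simp) fun t ht ↦ hR' t ht.le
  have hd : ∀ t, HasDerivAt
      (fun t ↦ (t ^ 2 - 4 * t + 2) * exp t ^ 2 + (t ^ 3 + t ^ 2 + 4 * t - 4) * exp t + 2)
      (t * exp t * ((2 * t - 6) * exp t + t ^ 2 + 4 * t + 6)) t := fun t ↦
    ((((((hasDerivAt_pow 2 t).sub ((hasDerivAt_id' t).const_mul 4)).add_const 2).mul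
      ((hasDerivAt_exp t).pow 2)).add (((((hasDerivAt_pow 3 t).add (hasDerivAt_pow 2 t)).add
      ((hasDerivAt_id' t).const_mul 4)).sub_const 4).mul (hasDerivAt_exp t))).add_const 2)
      |>.congr_deriv (by simp only [Pi.pow_apply, Pi.add_apply, Pi.sub_apply]; push_cast; ring)
  refine nonneg_of_hasDerivAt_nonneg hd (by norm_num) (fun t ht ↦ ?_) hu
  exact mul_nonneg (mul_nonneg ht.le (exp_pos t).le) (hR t ht.le)

noncomputable def expRatio (u : ℝ) : ℝ := u * (exp u - 1) / (exp u - u - 1)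

noncomputable def expRatioDeriv (u : ℝ) : ℝ :=
  ((exp u - 1) ^ 2 - u ^ 2 * exp u) / (exp u - u - 1) ^ 2

noncomputable def expRatioDeriv2 (u : ℝ) : ℝ :=
  ((u ^ 2 - 4 * u + 2) * exp u ^ 2 + (u ^ 3 + u ^ 2 + 4 * u - 4) * exp u + 2) /
    (exp u - u - 1) ^ 3

lemma exp_sub_self_sub_one_pos {u : ℝ} (hu : u ≠ 0) : 0 < exp u - u - 1 := by
  linarith [add_one_lt_exp hu]

lemma hasDerivAt_exp_sub_self_sub_one (u : ℝ) :
    HasDerivAt (fun u ↦ exp u - u - 1) (exp u - 1) u :=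
  ((hasDerivAt_exp u).sub (hasDerivAt_id' u)).sub_const 1

lemma hasDerivAt_expRatio {u : ℝ} (hu : u ≠ 0) : HasDerivAt expRatio (expRatioDeriv u) u := by
  have hf := exp_sub_self_sub_one_pos hu
  refine (((hasDerivAt_id' u).mul ((hasDerivAt_exp u).sub_const 1)).div
    (hasDerivAt_exp_sub_self_sub_one u) hf.ne').congr_deriv ?_
  rw [expRatioDeriv, Pi.mul_apply, div_eq_div_iff (by positivity) (by positivity)]
  ring

lemma hasDerivAt_expRatioDeriv {u : ℝ} (hu : u ≠ 0) :
    HasDerivAt expRatioDeriv (expRatioDeriv2 u) u := by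
  have hf := exp_sub_self_sub_one_pos hu
  have hnum : HasDerivAt (fun u ↦ (exp u - 1) ^ 2 - u ^ 2 * exp u)
      (2 * (exp u - 1) * exp u - (2 * u + u ^ 2) * exp u) u :=
    ((((hasDerivAt_exp u).sub_const 1).pow 2).sub
      ((hasDerivAt_pow 2 u).mul (hasDerivAt_exp u))).congr_deriv (by push_cast; ring)
  have hden : HasDerivAt (fun u ↦ (exp u - u - 1) ^ 2) (2 * (exp u - u - 1) * (exp u - 1)) u :=
    ((hasDerivAt_exp_sub_self_sub_one u).pow 2).congr_deriv (by push_cast; ring)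
  refine (hnum.div hden (by positivity)).congr_deriv ?_
  rw [expRatioDeriv2, div_eq_div_iff (by positivity) (by positivity)]
  ring

lemma expRatioDeriv_pos {u : ℝ} (hu : 0 < u) : 0 < expRatioDeriv u :=
  div_pos (sub_pos.2 (sq_mul_exp_lt_sq_exp_sub_one hu))
    (pow_pos (exp_sub_self_sub_one_pos hu.ne') 2)

lemma expRatioDeriv2_nonneg {u : ℝ} (hu : 0 < u) : 0 ≤ expRatioDeriv2 u :=
  div_nonneg (expRatioDeriv2_num_nonneg hu.le) (pow_pos (exp_sub_self_sub_one_pos hu.ne') 3).le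

lemma strictMonoOn_expRatio : StrictMonoOn expRatio (Ioi 0) := by
  refine strictMonoOn_of_hasDerivWithinAt_pos (f' := expRatioDeriv) (convex_Ioi 0)
    (fun u hu ↦ (hasDerivAt_expRatio (ne_of_gt hu)).continuousAt.continuousWithinAt)
    (fun u hu ↦ ?_) (fun u hu ↦ ?_) <;> rw [interior_Ioi] at hu
  · exact (hasDerivAt_expRatio (ne_of_gt hu)).hasDerivWithinAt
  · exact expRatioDeriv_pos hu

lemma convexOn_expRatio : ConvexOn ℝ (Ioi 0) expRatio := by
  refine convexOn_of_hasDerivWithinAt2_nonneg (f' := expRatioDeriv) (f'' := expRatioDeriv2)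
    (convex_Ioi 0)
    (fun u hu ↦ (hasDerivAt_expRatio (ne_of_gt hu)).continuousAt.continuousWithinAt)
    (fun u hu ↦ ?_) (fun u hu ↦ ?_) (fun u hu ↦ ?_) <;> rw [interior_Ioi] at hu
  · exact (hasDerivAt_expRatio (ne_of_gt hu)).hasDerivWithinAt
  · exact (hasDerivAt_expRatioDeriv (ne_of_gt hu)).hasDerivWithinAt
  · exact expRatioDeriv2_nonneg hu

/-- With `f(u) = e^u - u - 1` and `ζ(x)` the unique positive root of
`ζ(e^ζ-1)/f(ζ) = x` for `x > 2`, the function `ζ` is concave on `(2, ∞)`,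
i.e. `ζ''(x) ≤ 0` for all `x > 2`. -/
theorem stmt_6 (f ζ : ℝ → ℝ)
    (hf : ∀ u, f u = Real.exp u - u - 1)
    (hζ : ∀ x > 2, 0 < ζ x ∧ ζ x * (Real.exp (ζ x) - 1) / f (ζ x) = x) :
    ConcaveOn ℝ (Set.Ioi 2) ζ ∧ ∀ x > 2, deriv (deriv ζ) x ≤ 0 := by
  have hmaps : MapsTo ζ (Ioi 2) (Ioi 0) := fun x hx ↦ (hζ x hx).1
  have hinv : LeftInvOn expRatio ζ (Ioi 2) := fun x hx ↦ by
    simpa only [expRatio, hf] using (hζ x hx).2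
  have hderiv : ∀ x ∈ Ioi 2, HasDerivAt ζ (expRatioDeriv (ζ x))⁻¹ x := fun x hx ↦
    strictMonoOn_expRatio.hasDerivAt_of_leftInvOn hmaps hinv isOpen_Ioi isOpen_Ioi hx
      (hasDerivAt_expRatio (hmaps hx).ne') (expRatioDeriv_pos (hmaps hx)).ne'
  refine ⟨convexOn_expRatio.concaveOn_of_leftInvOn strictMonoOn_expRatio (convex_Ioi 2) hmaps
    hinv, fun x hx ↦ ?_⟩
  have hu : 0 < ζ x := hmaps hx
  rw [(hasDerivAt_deriv_of_hasDerivAt_inv_comp (isOpen_Ioi.mem_nhds hx) hderiv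
    (hasDerivAt_expRatioDeriv hu.ne') (expRatioDeriv_pos hu).ne').deriv]
  exact div_nonpos_of_nonpos_of_nonneg (neg_nonpos.2 (expRatioDeriv2_nonneg hu))
    (pow_pos (expRatioDeriv_pos hu) 3).le
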